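/- Let ⊳ be the proper subterm relation on first-order terms and ≻ a reduction order (a well-founded order closed under contexts and substitutions). Then the relation ≻_st defined as the transitive closure of (≻ ∪ ⊳) is well-founded. -/

import Mathlib

/-- First-order terms over signature `F` with variables `V`. -/
inductive Term (F V : Type) : Type where
  | var : V → Term F V
  | app : F → List (Term F V) → Term F V

namespace Term

variable {F V : Type}

mutual
/-- Application of a substitution to a term. -/
def subst (σ : V → Term F V) : Term F V → Term F V
  | .var x => σ x
  | .app f ts => .app f (substList σ ts)

/-- Application of a substitution to a list of terms. -/
def substList (σ : V → Term F V) : List (Term F V) → List (Term F V)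
  | [] => []
  | t :: ts => t.subst σ :: substList σ ts
end

/-- `t.HasVar x` means the variable `x` occurs in `t`. -/
inductive HasVar : Term F V → V → Prop where
  | var : ∀ x, HasVar (.var x) x
  | app : ∀ {f ts t x}, t ∈ ts → HasVar t x → HasVar (.app f ts) x

/-- `DirectSubterm t s`: `t` is an immediate subterm (argument) of `s`. -/
def DirectSubterm (t s : Term F V) : Prop :=
  ∃ f ts, s = Term.app f ts ∧ t ∈ ts

/-- `ProperSubterm t s`: `t` is a proper subterm of `s` (so `s ⊳ t`). -/
def ProperSubterm : Term F V → Term F V → Prop :=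
  Relation.TransGen DirectSubterm

/-- Reflexive subterm relation: `Subterm t s` iff `s ⊵ t`. -/
def Subterm : Term F V → Term F V → Prop :=
  Relation.ReflTransGen DirectSubterm

/-- Subterm of `t` at position `p`, if any. -/
def subtermAt : Term F V → List ℕ → Option (Term F V)
  | t, [] => some t
  | .var _, _ :: _ => none
  | .app _ ts, i :: p =>
    match ts[i]? with
    | some t => t.subtermAt p
    | none => none

/-- Replace the subterm at position `p` by `u`, if the position exists. -/
def replaceAt : Term F V → List ℕ → Term F V → Option (Term F V)
  | _, [], u => some u
  | .var _, _ :: _, _ => none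
  | .app f ts, i :: p, u =>
    match ts[i]? with
    | some t => (t.replaceAt p u).map (fun t' => Term.app f (ts.set i t'))
    | none => none

end Term

/-- A rewrite relation is closed under contexts if it is closed under
placing both sides in the same argument position of a function application. -/
def ClosedUnderCtx {F V : Type} (r : Term F V → Term F V → Prop) : Prop :=
  ∀ (f : F) (ts₁ ts₂ : List (Term F V)) (s t : Term F V),
    r s t → r (Term.app f (ts₁ ++ s :: ts₂)) (Term.app f (ts₁ ++ t :: ts₂))

/-- Closure under substitutions. -/
def ClosedUnderSubst {F V : Type} (r : Term F V → Term F V → Prop) : Prop :=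
  ∀ (s t : Term F V) (σ : V → Term F V), r s t → r (s.subst σ) (t.subst σ)

/-- `a` is a normal form of `r` if it has no `r`-successor. -/
def NormalForm {A : Type} (r : A → A → Prop) (a : A) : Prop :=
  ∀ b, ¬ r a b

/-- A substitution is normalized if it maps every variable to a normal form. -/
def NormalizedSubst {F V : Type} (r : Term F V → Term F V → Prop)
    (σ : V → Term F V) : Prop :=
  ∀ x, NormalForm r (σ x)

/-- A term is strongly irreducible w.r.t. `r` if all its instances by
normalized substitutions are normal forms. -/
def StronglyIrreducible {F V : Type} (r : Term F V → Term F V → Prop)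
    (t : Term F V) : Prop :=
  ∀ σ, NormalizedSubst r σ → NormalForm r (t.subst σ)

/-- Joinability. -/
def Joinable {A : Type} (r : A → A → Prop) (t u : A) : Prop :=
  ∃ v, Relation.ReflTransGen r t v ∧ Relation.ReflTransGen r u v

/-- Confluence. -/
def Confluent {A : Type} (r : A → A → Prop) : Prop :=
  ∀ s t u, Relation.ReflTransGen r s t → Relation.ReflTransGen r s u →
    Joinable r t u

/-!
Accessibility of `s` for `≻ ∪ ⊳` is proved by induction along `≻`, with an inner induction
along `⊳` for the proper subterms `t` of `s`. The only nontrivial case is a `≻`-step `t ≻ u`: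
closure under contexts lifts it to `s ≻ s'` with `u` a proper subterm of `s'`, and `s'` is
accessible by the outer induction hypothesis.
-/

theorem WellFounded.or_of_commute {α : Type*} {r q : α → α → Prop}
    (hr : WellFounded r) (hq : WellFounded q) [IsTrans α q]
    (hcomm : ∀ a b c, q b a → r c b → ∃ b', r b' a ∧ q c b') :
    WellFounded (fun x y => r x y ∨ q x y) := by
  refine ⟨fun a => hr.induction a fun s ih_r => ?_⟩
  have acc_below : ∀ t, q t s → Acc (fun x y => r x y ∨ q x y) t := by
    intro t
    induction t using hq.induction with
    | _ t ih_q =>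
      intro hts
      refine ⟨t, fun y hy => ?_⟩
      rcases hy with hyt | hyt
      · obtain ⟨s', hs', hys'⟩ := hcomm s t y hts hyt
        exact (ih_r s' hs').inv (Or.inr hys')
      · exact ih_q y hyt (_root_.trans hyt hts)
  exact ⟨s, fun y hy => hy.elim (ih_r y) (acc_below y)⟩

namespace Term

variable {F V : Type}

theorem sizeOf_lt_of_directSubterm {t s : Term F V} (h : DirectSubterm t s) :
    sizeOf t < sizeOf s := by
  obtain ⟨f, ts, rfl, hmem⟩ := h
  have := List.sizeOf_lt_of_mem hmem
  simp only [Term.app.sizeOf_spec, sizeOf_default]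
  omega

theorem wellFounded_directSubterm : WellFounded (DirectSubterm (F := F) (V := V)) :=
  Subrelation.wf sizeOf_lt_of_directSubterm (measure sizeOf).wf

theorem wellFounded_properSubterm : WellFounded (ProperSubterm (F := F) (V := V)) :=
  wellFounded_directSubterm.transGen

instance : IsTrans (Term F V) ProperSubterm :=
  inferInstanceAs (IsTrans _ (Relation.TransGen _))

end Term

namespace ClosedUnderCtx

variable {F V : Type} {r : Term F V → Term F V → Prop}

theorem exists_directSubterm (hctx : ClosedUnderCtx r) {s t u : Term F V}
    (hts : Term.DirectSubterm t s) (htu : r t u) :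
    ∃ s', r s s' ∧ Term.DirectSubterm u s' := by
  obtain ⟨f, ts, rfl, hmem⟩ := hts
  obtain ⟨ts₁, ts₂, rfl⟩ := List.append_of_mem hmem
  exact ⟨.app f (ts₁ ++ u :: ts₂), hctx f ts₁ ts₂ t u htu, f, _, rfl, by simp⟩

theorem exists_properSubterm (hctx : ClosedUnderCtx r) {s t u : Term F V}
    (hts : Term.ProperSubterm t s) (htu : r t u) :
    ∃ s', r s s' ∧ Term.ProperSubterm u s' := by
  induction hts with
  | single hts =>
    obtain ⟨s', hss', hus'⟩ := hctx.exists_directSubterm hts htu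
    exact ⟨s', hss', .single hus'⟩
  | tail _ hms ih =>
    obtain ⟨m', hmm', hum'⟩ := ih
    obtain ⟨s', hss', hm's'⟩ := hctx.exists_directSubterm hms hmm'
    exact ⟨s', hss', hum'.tail hm's'⟩

end ClosedUnderCtx

/-- For a reduction order `≻` (well-founded, transitive, irreflexive, closed
under contexts and substitutions), the relation `≻_st = (≻ ∪ ⊳)⁺` is
well-founded. -/
theorem wf_redOrd_union_subterm {F V : Type}
    (succ : Term F V → Term F V → Prop)
    (hwf : WellFounded (fun t s => succ s t))
    (htrans : Transitive succ)
    (hirr : Irreflexive succ)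
    (hctx : ClosedUnderCtx succ)
    (hsubst : ClosedUnderSubst succ) :
    WellFounded (Relation.TransGen
      (fun t s => succ s t ∨ Term.ProperSubterm t s)) :=
  (hwf.or_of_commute Term.wellFounded_properSubterm
    fun _ _ _ hts htu => hctx.exists_properSubterm hts htu).transGen
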